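/- For every ν ∈ [0,1) the following hold: (i) V_0(0)/V_0(iΥ_ν) = (π/2)·w_ν, so that C_ν = η_ν·(1 − V_0(0)/V_0(iΥ_ν)); (ii) C_ν = (π/12)·(√(9+4ν²) − 4ν) + (1 − π/4)·η_ν; and (iii) C_ν ≤ (√(225+4ν²) − 8ν)/15, i.e. the minimum min{η_ν·(1 − V_0(0)/V_0(iΥ_ν)), (√(225+4ν²) − 8ν)/15} is always attained at the first entry. -/

import Mathlib

/-!
Write `u = Υ_ν`, so that `w_ν = ucot u` with `ucot u = u cot (π u / 2)`.

(i) Euler's reflection formula and `Γ (s + 1) = s Γ s` give `V_0(0) = π / 2` and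
`V_0(i z) = tan (π z / 2) / z` for every complex `z ≠ 0`. (ii) is algebra once `1 - 2 w_ν ≠ 0`
for `ν ≠ √3/2`, which holds because `ucot` is strictly decreasing with `ucot (1/2) = 1/2`.

(iii) With `s = √(9 + 4ν²)` and `t = √(225 + 4ν²)`, for `W = w_ν ≠ 1/2` the claim is equivalent
to `(1 - 2W) · defect ν W ≥ 0`, where `defect ν W = 3 (t - 8ν)(1 - 2W) - 15 (1 - πW/2)(s - 4ν)`
is affine and decreasing in `W`. As `ucot` is concave on `(0, 2)`, its tangents at `1` and `1/2`
bound `w_ν` from above, and its chords (with monotonicity) bound it from below. Substituting the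
bound on the appropriate side leaves explicit inequalities in `ν`, checked by interval estimates
for `π`, `s` and `t`.
-/

/-- Υ_ν := √(1 − ν²). -/
noncomputable def Ups (ν : ℝ) : ℝ := Real.sqrt (1 - ν ^ 2)

/-- w_ν := Υ_ν · cot(π Υ_ν / 2) for ν ∈ [0,1), with w_1 := 2/π (continuous extension). -/
noncomputable def w (ν : ℝ) : ℝ :=
  if ν = 1 then 2 / Real.pi else Ups ν * Real.cot (Real.pi * Ups ν / 2)

/-- η_ν := (√(9+4ν²) − 4ν)/(3(1 − 2 w_ν)) for ν ≠ √3/2, and η_{√3/2} := 1/(√3 (π−2)). -/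
noncomputable def eta (ν : ℝ) : ℝ :=
  if ν = Real.sqrt 3 / 2 then 1 / (Real.sqrt 3 * (Real.pi - 2))
  else (Real.sqrt (9 + 4 * ν ^ 2) - 4 * ν) / (3 * (1 - 2 * w ν))

/-- C_ν := (1 − π w_ν/2) η_ν. -/
noncomputable def Cnu (ν : ℝ) : ℝ := (1 - Real.pi * w ν / 2) * eta ν

/-- V_l(z) := Γ((l+1+iz)/2)Γ((l+1−iz)/2) / (2 Γ((l+2+iz)/2)Γ((l+2−iz)/2)). -/
noncomputable def Vl (l : ℕ) (z : ℂ) : ℂ :=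
  Complex.Gamma ((l + 1 + Complex.I * z) / 2) * Complex.Gamma ((l + 1 - Complex.I * z) / 2) /
    (2 * Complex.Gamma ((l + 2 + Complex.I * z) / 2) * Complex.Gamma ((l + 2 - Complex.I * z) / 2))

open Real Set

lemma Vl_zero_zero : Vl 0 0 = π / 2 := by
  have h := Complex.Gamma_mul_Gamma_one_sub (1 / 2)
  rw [show (1 : ℂ) - 1 / 2 = 1 / 2 by norm_num,
    show (π : ℂ) * (1 / 2) = (π / 2 : ℝ) by push_cast; ring, ← Complex.ofReal_sin,
    sin_pi_div_two] at h
  norm_num [Vl, Complex.Gamma_one, h]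

lemma Vl_zero_I_mul {z : ℂ} (hz : z ≠ 0) :
    Vl 0 (Complex.I * z) = Complex.tan (π * z / 2) / z := by
  have hI : Complex.I * (Complex.I * z) = -z := by rw [← mul_assoc, Complex.I_mul_I]; ring
  have hcos :
      Complex.Gamma ((1 - z) / 2) * Complex.Gamma ((1 + z) / 2) = π / Complex.cos (π * z / 2) := by
    rw [show (1 - z) / 2 = 1 - (1 + z) / 2 by ring, mul_comm, Complex.Gamma_mul_Gamma_one_sub,
      show (π : ℂ) * ((1 + z) / 2) = π * z / 2 + π / 2 by ring, Complex.sin_add_pi_div_two]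
  have hsin :
      Complex.Gamma (z / 2) * Complex.Gamma ((2 - z) / 2) = π / Complex.sin (π * z / 2) := by
    rw [show (2 - z) / 2 = 1 - z / 2 by ring, Complex.Gamma_mul_Gamma_one_sub, mul_div_assoc]
  have hrec : Complex.Gamma ((2 + z) / 2) = z / 2 * Complex.Gamma (z / 2) := by
    rw [show (2 + z) / 2 = z / 2 + 1 by ring, Complex.Gamma_add_one _ (by simpa using hz)]
  simp only [Vl, hI, Nat.cast_zero, zero_add, ← sub_eq_add_neg, sub_neg_eq_add, hrec]
  rw [hcos, Complex.tan_eq_sin_div_cos,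
    show 2 * Complex.Gamma ((2 - z) / 2) * (z / 2 * Complex.Gamma (z / 2))
      = z * (Complex.Gamma (z / 2) * Complex.Gamma ((2 - z) / 2)) by ring, hsin]
  field_simp

lemma Vl_zero_div_Vl_zero_I_mul {z : ℂ} (hz : z ≠ 0) :
    Vl 0 0 / Vl 0 (Complex.I * z) = π / 2 * (z * Complex.cot (π * z / 2)) := by
  rw [Vl_zero_zero, Vl_zero_I_mul hz, Complex.tan_eq_sin_div_cos, Complex.cot_eq_cos_div_sin]
  field_simp

lemma ConcaveOn.le_tangent {S : Set ℝ} {f : ℝ → ℝ} {f' x y : ℝ} (hf : ConcaveOn ℝ S f)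
    (hx : x ∈ S) (hy : y ∈ S) (hd : HasDerivAt f f' x) : f y ≤ f x + f' * (y - x) := by
  rcases lt_trichotomy y x with hyx | rfl | hxy
  · have h := hf.le_slope_of_hasDerivAt hy hx hyx hd
    rw [slope_def_field, le_div_iff₀ (sub_pos.mpr hyx)] at h
    linarith
  · simp
  · have h := hf.slope_le_of_hasDerivAt hx hy hxy hd
    rw [slope_def_field, div_le_iff₀ (sub_pos.mpr hxy)] at h
    linarith

lemma ConcaveOn.secant_le {S : Set ℝ} {f : ℝ → ℝ} {x y z : ℝ} (hf : ConcaveOn ℝ S f)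
    (hx : x ∈ S) (hy : y ∈ S) (hxz : x ≤ z) (hzy : z ≤ y) :
    (y - z) * f x + (z - x) * f y ≤ (y - x) * f z := by
  rcases eq_or_lt_of_le (hxz.trans hzy) with rfl | hxy
  · obtain rfl : z = x := le_antisymm hzy hxz
    simp
  have hpos : 0 < y - x := sub_pos.mpr hxy
  have h := hf.2 hx hy (div_nonneg (sub_nonneg.mpr hzy) hpos.le)
    (div_nonneg (sub_nonneg.mpr hxz) hpos.le) (by field_simp; ring)
  rw [smul_eq_mul, smul_eq_mul, smul_eq_mul, smul_eq_mul,
    show (y - z) / (y - x) * x + (z - x) / (y - x) * y = z by field_simp; ring] at h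
  rw [← div_le_iff₀' hpos]
  calc _ = (y - z) / (y - x) * f x + (z - x) / (y - x) * f y := by ring
    _ ≤ f z := h

noncomputable def ucot (u : ℝ) : ℝ := u * cot (π * u / 2)

noncomputable def ucotDeriv (u : ℝ) : ℝ :=
  (sin (π * u / 2) * cos (π * u / 2) - π / 2 * u) / sin (π * u / 2) ^ 2

lemma mul_cos_lt_sin {x : ℝ} (h0 : 0 < x) (hπ : x < π) : x * cos x < sin x := by
  have hsin := sin_pos_of_pos_of_lt_pi h0 hπ
  rcases lt_or_ge x (π / 2) with hx | hx
  · have hcos := cos_pos_of_mem_Ioo ⟨by linarith, hx⟩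
    have htan := lt_tan h0 hx
    rwa [tan_eq_sin_div_cos, lt_div_iff₀ hcos] at htan
  · have hcos := cos_nonpos_of_pi_div_two_le_of_le hx (by linarith)
    nlinarith

lemma sin_pi_mul_div_two_pos {u : ℝ} (h0 : 0 < u) (h2 : u < 2) : 0 < sin (π * u / 2) :=
  sin_pos_of_pos_of_lt_pi (by positivity) (by nlinarith [pi_pos])

lemma hasDerivAt_pi_mul_div_two (u : ℝ) : HasDerivAt (fun v : ℝ => π * v / 2) (π / 2) u := by
  simpa using ((hasDerivAt_id u).const_mul π).div_const 2

lemma hasDerivAt_sin_pi_mul_div_two (u : ℝ) :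
    HasDerivAt (fun v => sin (π * v / 2)) (cos (π * u / 2) * (π / 2)) u :=
  (hasDerivAt_sin _).comp u (hasDerivAt_pi_mul_div_two u)

lemma hasDerivAt_cos_pi_mul_div_two (u : ℝ) :
    HasDerivAt (fun v => cos (π * v / 2)) (-sin (π * u / 2) * (π / 2)) u :=
  (hasDerivAt_cos _).comp u (hasDerivAt_pi_mul_div_two u)

lemma hasDerivAt_ucot {u : ℝ} (h0 : 0 < u) (h2 : u < 2) : HasDerivAt ucot (ucotDeriv u) u := by
  have hs := sin_pi_mul_div_two_pos h0 h2
  have hnum : HasDerivAt (fun v => v * cos (π * v / 2))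
      (1 * cos (π * u / 2) + u * (-sin (π * u / 2) * (π / 2))) u :=
    (hasDerivAt_id' u).mul (hasDerivAt_cos_pi_mul_div_two u)
  have hf : ucot = fun v => v * cos (π * v / 2) / sin (π * v / 2) := by
    funext v; rw [ucot, cot_eq_cos_div_sin, mul_div_assoc']
  rw [hf]
  refine (hnum.div (hasDerivAt_sin_pi_mul_div_two u) hs.ne').congr_deriv ?_
  rw [ucotDeriv]
  congr 1
  linear_combination (-(π / 2) * u) * sin_sq_add_cos_sq (π * u / 2)

lemma hasDerivAt_ucotDeriv {u : ℝ} (h0 : 0 < u) (h2 : u < 2) :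
    HasDerivAt ucotDeriv
      (π * (π / 2 * u * cos (π * u / 2) - sin (π * u / 2)) / sin (π * u / 2) ^ 3) u := by
  have hs := sin_pi_mul_div_two_pos h0 h2
  have hsin := hasDerivAt_sin_pi_mul_div_two u
  have hnum : HasDerivAt (fun v => sin (π * v / 2) * cos (π * v / 2) - π / 2 * v)
      (cos (π * u / 2) * (π / 2) * cos (π * u / 2) +
        sin (π * u / 2) * (-sin (π * u / 2) * (π / 2)) - π / 2 * 1) u :=
    (hsin.mul (hasDerivAt_cos_pi_mul_div_two u)).sub ((hasDerivAt_id' u).const_mul (π / 2))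
  have hden : HasDerivAt (fun v => sin (π * v / 2) ^ 2)
      ((2 : ℕ) * sin (π * u / 2) ^ 1 * (cos (π * u / 2) * (π / 2))) u := hsin.pow 2
  refine (hnum.div hden (by positivity)).congr_deriv ?_
  rw [div_eq_div_iff (by positivity) (by positivity)]
  push_cast
  linear_combination (-(π / 2) * sin (π * u / 2) ^ 5) * sin_sq_add_cos_sq (π * u / 2)

lemma ucotDeriv_neg {u : ℝ} (h0 : 0 < u) (h2 : u < 2) : ucotDeriv u < 0 := by
  have hs := sin_pi_mul_div_two_pos h0 h2
  have hlt : sin (π * u) < π * u := sin_lt (by positivity)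
  rw [show π * u = 2 * (π * u / 2) by ring, sin_two_mul] at hlt
  exact div_neg_of_neg_of_pos (by linarith) (by positivity)

lemma strictAntiOn_ucot : StrictAntiOn ucot (Ioo 0 2) :=
  strictAntiOn_of_hasDerivWithinAt_neg (convex_Ioo 0 2)
    (fun u hu => (hasDerivAt_ucot hu.1 hu.2).continuousAt.continuousWithinAt)
    (fun u hu => by
      rw [interior_Ioo] at hu
      exact (hasDerivAt_ucot hu.1 hu.2).hasDerivWithinAt)
    (fun u hu => by
      rw [interior_Ioo] at hu
      exact ucotDeriv_neg hu.1 hu.2)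

lemma concaveOn_ucot : ConcaveOn ℝ (Ioo 0 2) ucot := by
  refine concaveOn_of_hasDerivWithinAt2_nonpos (f' := ucotDeriv)
    (f'' := fun u => π * (π / 2 * u * cos (π * u / 2) - sin (π * u / 2)) / sin (π * u / 2) ^ 3)
    (convex_Ioo 0 2)
    (fun u hu => (hasDerivAt_ucot hu.1 hu.2).continuousAt.continuousWithinAt) ?_ ?_ ?_ <;>
    rw [interior_Ioo] <;> intro u hu
  · exact (hasDerivAt_ucot hu.1 hu.2).hasDerivWithinAt
  · exact (hasDerivAt_ucotDeriv hu.1 hu.2).hasDerivWithinAt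
  · have hs := sin_pi_mul_div_two_pos hu.1 hu.2
    have h := mul_cos_lt_sin (x := π * u / 2) (div_pos (mul_pos pi_pos hu.1) two_pos)
      (by nlinarith [pi_pos, hu.2])
    exact div_nonpos_of_nonpos_of_nonneg
      (mul_nonpos_of_nonneg_of_nonpos pi_pos.le (by linarith)) (by positivity)

lemma ucot_one : ucot 1 = 0 := by
  simp [ucot, cot_eq_cos_div_sin]

lemma ucot_half : ucot (1 / 2) = 1 / 2 := by
  rw [ucot, show π * (1 / 2) / 2 = π / 4 by ring, cot_eq_cos_div_sin, cos_pi_div_four,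
    sin_pi_div_four, div_self (by positivity), mul_one]

lemma ucotDeriv_one : ucotDeriv 1 = -(π / 2) := by
  simp [ucotDeriv]

lemma ucotDeriv_half : ucotDeriv (1 / 2) = 1 - π / 2 := by
  have h2 : √2 ^ 2 = 2 := sq_sqrt (by norm_num)
  rw [ucotDeriv, show π * (1 / 2) / 2 = π / 4 by ring, sin_pi_div_four, cos_pi_div_four]
  field_simp
  linear_combination π * h2

lemma three_fifths_le_ucot_quarter : 3 / 5 ≤ ucot (1 / 4) := by
  have hs : 0 < sin (π / 8) := sin_pos_of_pos_of_lt_pi (by positivity) (by linarith [pi_pos])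
  have hc : 0 < cos (π / 8) := cos_pos_of_mem_Ioo ⟨by linarith [pi_pos], by linarith [pi_pos]⟩
  have hdouble : √2 / 2 = 2 * cos (π / 8) ^ 2 - 1 := by
    rw [← cos_pi_div_four, show π / 4 = 2 * (π / 8) by ring, cos_two_mul]
  have h2 : √2 ^ 2 = 2 := sq_sqrt (by norm_num)
  have hsq2 : 1.41 < √2 := by nlinarith [sqrt_nonneg 2]
  have hsq : (12 * sin (π / 8)) ^ 2 ≤ (5 * cos (π / 8)) ^ 2 := by
    nlinarith [sin_sq_add_cos_sq (π / 8)]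
  have h := pow_le_pow_iff_left₀ (by positivity) (by positivity) two_ne_zero |>.mp hsq
  rw [ucot, show π * (1 / 4) / 2 = π / 8 by ring, cot_eq_cos_div_sin, mul_div_assoc',
    le_div_iff₀ hs]
  linarith

lemma ucot_le_tangent_one {u : ℝ} (hu : u ∈ Ioo 0 2) : ucot u ≤ π / 2 * (1 - u) := by
  have h := concaveOn_ucot.le_tangent ⟨one_pos, one_lt_two⟩ hu (hasDerivAt_ucot one_pos one_lt_two)
  rw [ucot_one, ucotDeriv_one] at h
  linarith

lemma ucot_le_tangent_half {u : ℝ} (hu : u ∈ Ioo 0 2) :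
    ucot u ≤ 1 / 2 + (1 - π / 2) * (u - 1 / 2) := by
  have h := concaveOn_ucot.le_tangent ⟨by norm_num, by norm_num⟩ hu
    (hasDerivAt_ucot (u := 1 / 2) (by norm_num) (by norm_num))
  rwa [ucot_half, ucotDeriv_half] at h

lemma one_sub_le_ucot {u : ℝ} (hu : u ∈ Icc (1 / 2) 1) : 1 - u ≤ ucot u := by
  have h := concaveOn_ucot.secant_le (x := 1 / 2) (y := 1) ⟨by norm_num, by norm_num⟩
    ⟨one_pos, one_lt_two⟩ hu.1 hu.2
  rw [ucot_half, ucot_one] at h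
  linarith

lemma secant_le_ucot {u : ℝ} (hu : u ∈ Icc (1 / 4) (1 / 2)) : 7 / 10 - 2 / 5 * u ≤ ucot u := by
  have h := concaveOn_ucot.secant_le (x := 1 / 4) (y := 1 / 2) ⟨by norm_num, by norm_num⟩
    ⟨by norm_num, by norm_num⟩ hu.1 hu.2
  rw [ucot_half] at h
  nlinarith [three_fifths_le_ucot_quarter, hu.2]

lemma three_fifths_le_ucot {u : ℝ} (hu : u ∈ Ioc 0 (1 / 4)) : 3 / 5 ≤ ucot u :=
  three_fifths_le_ucot_quarter.trans <|
    strictAntiOn_ucot.antitoneOn ⟨hu.1, by linarith [hu.2]⟩ ⟨by norm_num, by norm_num⟩ hu.2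

noncomputable def defect (ν W : ℝ) : ℝ :=
  (√(225 + 4 * ν ^ 2) - 8 * ν) * (3 * (1 - 2 * W)) -
    15 * ((1 - π * W / 2) * (√(9 + 4 * ν ^ 2) - 4 * ν))

lemma mul_sqrt_sub_le {c ν : ℝ} (hc3 : 3 ≤ c) (hc5 : c ≤ 5) (hν : 0 ≤ ν) :
    c * (√(9 + 4 * ν ^ 2) - 4 * ν) ≤ √(225 + 4 * ν ^ 2) - 8 * ν := by
  have hs := sq_sqrt (by positivity : (0 : ℝ) ≤ 9 + 4 * ν ^ 2)
  have ht := sq_sqrt (by positivity : (0 : ℝ) ≤ 225 + 4 * ν ^ 2)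
  have hs0 := sqrt_nonneg (9 + 4 * ν ^ 2)
  have ht0 := sqrt_nonneg (225 + 4 * ν ^ 2)
  set s := √(9 + 4 * ν ^ 2)
  set t := √(225 + 4 * ν ^ 2)
  have ht2 : 2 * ν ≤ t := by nlinarith
  have hsq : (c * s) ^ 2 ≤ (t + (4 * c - 8) * ν) ^ 2 := by
    nlinarith [mul_le_mul_of_nonneg_left ht2 (by nlinarith : 0 ≤ 2 * (4 * c - 8) * ν),
      mul_nonneg (sq_nonneg ν)
        (mul_nonneg (by linarith : 0 ≤ 2 * c - 6) (by linarith : 0 ≤ 6 * c - 6)),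
      mul_nonneg (by linarith : 0 ≤ 5 - c) (by linarith : 0 ≤ 5 + c)]
  have := (pow_le_pow_iff_left₀ (by nlinarith) (by nlinarith) two_ne_zero).mp hsq
  linarith

lemma defect_antitone {ν : ℝ} (hν : 0 ≤ ν) : Antitone (defect ν) := by
  -- The slope of `defect ν` is `-6 (√(225 + 4ν²) - 8ν) + 15π/2 (√(9 + 4ν²) - 4ν)`.
  have hslope := mul_sqrt_sub_le (c := 5 * π / 4) (by linarith [pi_gt_three])
    (by linarith [pi_lt_four]) hν
  intro a b hab
  simp only [defect]
  nlinarith [mul_le_mul_of_nonneg_left hslope (sub_nonneg.mpr hab)]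

lemma exists_sqrt_defect_eq (ν : ℝ) : ∃ s t : ℝ, s ^ 2 = 9 + 4 * ν ^ 2 ∧ 0 ≤ s ∧
    t ^ 2 = 225 + 4 * ν ^ 2 ∧ 0 ≤ t ∧
    ∀ W, defect ν W = (t - 8 * ν) * (3 * (1 - 2 * W)) - 15 * ((1 - π * W / 2) * (s - 4 * ν)) :=
  ⟨_, _, sq_sqrt (by positivity), sqrt_nonneg _, sq_sqrt (by positivity), sqrt_nonneg _,
    fun _ => rfl⟩

section regions

variable {ν u : ℝ}

lemma defect_tangent_one_nonneg (hν0 : 0 ≤ ν) (hν : ν ≤ 1 / 2) (hu2 : u ^ 2 = 1 - ν ^ 2)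
    (hu0 : 0 ≤ u) : 0 ≤ defect ν (π / 2 * (1 - u)) := by
  obtain ⟨s, t, hs, hs0, ht, ht0, hd⟩ := exists_sqrt_defect_eq ν
  have hπ1 : 3.141592 < π := pi_gt_d6
  have hπ2 : π < 3.141593 := pi_lt_d6
  obtain ⟨K, hK_def⟩ : ∃ K, K = 4 * t - 32 * ν - 5 * π * s + 20 * π * ν := ⟨_, rfl⟩
  -- Both `t - 5s` and `1 - u` are `O(ν²)`, so the linear term `36ν` wins; at `ν = 0` the
  -- defect vanishes.
  have hgap :
      defect ν (π / 2 * (1 - u)) = 3 * (t - 5 * s) + 36 * ν - 3 * π / 4 * ((1 - u) * K) := by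
    rw [hd, hK_def]
    ring
  have hs3 : 3 ≤ s := by nlinarith
  have hsle : s ≤ 3.2 := by nlinarith
  have ht15 : 15 ≤ t := by nlinarith
  have htle : t ≤ 15.04 := by nlinarith
  have hulb : 0.86 ≤ u := by nlinarith
  have hu1 : u ≤ 1 := by nlinarith
  have h5s : 5 * s ≤ t + 12 * ν := by
    nlinarith [mul_nonneg ht0 hν0, sq_nonneg (t + 12 * ν - 5 * s)]
  have hK : K ≤ 29 := by nlinarith
  have hKpos : 0 ≤ K := by
    rw [hK_def]
    nlinarith [mul_le_mul_of_nonneg_left h5s pi_pos.le,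
      mul_le_mul_of_nonneg_right hπ2.le (by linarith : 0 ≤ t - 8 * ν)]
  have h1u : (1 - u) * 1.86 ≤ ν ^ 2 := by nlinarith
  have hprod : (1 - u) * K ≤ 15.6 * ν ^ 2 := by
    linarith [mul_le_mul_of_nonneg_left hK (by linarith : 0 ≤ 1 - u), sq_nonneg ν]
  have hprod' : 3 * π / 4 * ((1 - u) * K) ≤ 36.9 * ν ^ 2 := by
    linarith [mul_le_mul_of_nonneg_left hprod (by positivity : 0 ≤ 3 * π / 4),
      mul_le_mul_of_nonneg_right hπ2.le (sq_nonneg ν)]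
  have e2 : (t - 5 * s) * (t + 5 * s) = -96 * ν ^ 2 := by linear_combination ht - 25 * hs
  have hneg : t - 5 * s ≤ 0 := by
    by_contra! h
    nlinarith [mul_pos h (show 0 < t + 5 * s by linarith)]
  have hts : -3.2 * ν ^ 2 ≤ t - 5 * s := by
    linarith [mul_le_mul_of_nonpos_left (show 30 ≤ t + 5 * s by linarith) hneg]
  rw [hgap]
  linarith [mul_le_mul_of_nonneg_left hν hν0]

lemma defect_tangent_half_nonneg (hν0 : 1 / 2 ≤ ν) (hν : ν ≤ 3 / 5) (hu2 : u ^ 2 = 1 - ν ^ 2)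
    (hu0 : 0 ≤ u) : 0 ≤ defect ν (1 / 2 + (1 - π / 2) * (u - 1 / 2)) := by
  obtain ⟨s, t, hs, hs0, ht, ht0, hd⟩ := exists_sqrt_defect_eq ν
  rw [hd, sub_nonneg]
  have hπ1 : 3.141592 < π := pi_gt_d6
  have hπ2 : π < 3.141593 := pi_lt_d6
  set X := 1 / 2 + (1 - π / 2) * (u - 1 / 2) with hX
  have hs3 : 3.16 ≤ s := by nlinarith
  have hsle : s ≤ 3.24 := by nlinarith
  have ht15 : 15.03 ≤ t := by nlinarith
  have hulb : 0.8 ≤ u := by nlinarith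
  have huub : u ≤ 0.87 := by nlinarith
  have hts : 10.23 ≤ t - 8 * ν := by linarith
  have hb : s - 4 * ν ≤ 1.24 := by linarith
  have hb0 : 0 ≤ s - 4 * ν := by linarith
  have hXlb : 0.2887 ≤ X := by
    nlinarith [mul_le_mul_of_nonneg_left (show u - 1 / 2 ≤ 0.37 by linarith)
      (show (0 : ℝ) ≤ π / 2 - 1 by nlinarith)]
  have hXub : X ≤ 0.33 := by
    nlinarith [mul_le_mul_of_nonneg_left (show 0.3 ≤ u - 1 / 2 by linarith)
      (show (0 : ℝ) ≤ π / 2 - 1 by nlinarith)]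
  have ha : 1 - π * X / 2 ≤ 0.547 := by
    nlinarith [mul_le_mul hπ1.le hXlb (by norm_num) pi_pos.le]
  have hc : 0.342 ≤ 1 - 2 * X := by
    nlinarith [mul_le_mul (show 1.141592 ≤ π - 2 by linarith)
      (show 0.3 ≤ u - 1 / 2 by linarith) (by norm_num) (by linarith)]
  nlinarith [mul_le_mul ha hb hb0 (by norm_num), mul_le_mul hc hts (by norm_num) (by linarith)]

lemma between_reduced_bound {s t : ℝ} (hν0 : 3 / 5 ≤ ν) (hu2 : u ^ 2 = 1 - ν ^ 2) (hu : 1 / 2 < u)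
    (hs : s ^ 2 = 9 + 4 * ν ^ 2) (hs0 : 0 ≤ s) (ht : t ^ 2 = 225 + 4 * ν ^ 2) (ht0 : 0 ≤ t) :
    30 * (2 - π + π * u) * (u + 1 / 2) ≤ (π - 2) * ((s + 4 * ν) * (t - 8 * ν)) := by
  have hπ1 : 3.141592 < π := pi_gt_d6
  have hπ2 : π < 3.141593 := pi_lt_d6
  have hν86 : ν ≤ 0.8661 := by nlinarith
  have hu08 : u ≤ 0.8 := by nlinarith
  have h1 : 2 - π + π * u ≤ 1.3717 := by
    nlinarith [mul_le_mul_of_nonneg_left (show 0.2 ≤ 1 - u by linarith) pi_pos.le]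
  have h1' : 0 ≤ 2 - π + π * u := by
    linarith [mul_le_mul_of_nonneg_left (show 0 ≤ u - 1 / 2 by linarith) pi_pos.le]
  have h2 : 52 ≤ (s + 4 * ν) * (t - 8 * ν) := by
    have ht15 : 15 ≤ t := by nlinarith
    nlinarith [mul_le_mul (show 3 + 4 * ν ≤ s + 4 * ν by nlinarith)
      (show 15 - 8 * ν ≤ t - 8 * ν by linarith) (by linarith) (by linarith)]
  linarith [mul_le_mul_of_nonneg_left h2 (show (0 : ℝ) ≤ π - 2 by linarith),
    mul_le_mul h1 (show u + 1 / 2 ≤ 1.3 by linarith) (by linarith) (by norm_num)]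

lemma defect_between_nonneg {W : ℝ} (hν0 : 3 / 5 ≤ ν) (hu2 : u ^ 2 = 1 - ν ^ 2) (hu : 1 / 2 < u)
    (hW1u : 1 - u ≤ W) (hWT2 : W ≤ 1 / 2 + (1 - π / 2) * (u - 1 / 2)) : 0 ≤ defect ν W := by
  obtain ⟨s, t, hs, hs0, ht, ht0, hd⟩ := exists_sqrt_defect_eq ν
  rw [hd, sub_nonneg]
  -- Both `s - 4ν = 12 (u - 1/2)(u + 1/2) / (s + 4ν)` and the lower bound on `1 - 2W` carry the
  -- factor `u - 1/2`; after cancelling it, `between_reduced_bound` is what remains.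
  have key := between_reduced_bound hν0 hu2 hu hs hs0 ht ht0
  have hπ := pi_gt_three
  have hA0 : 0 ≤ s - 4 * ν := by nlinarith
  have hts : 0 ≤ t - 8 * ν := by nlinarith
  have hd1 : (π - 2) * (u - 1 / 2) ≤ 1 - 2 * W := by linarith
  have hnum : 1 - π * W / 2 ≤ (2 - π + π * u) / 2 := by
    nlinarith [mul_le_mul_of_nonneg_left hW1u pi_pos.le]
  have e3 : (s - 4 * ν) * (s + 4 * ν) = 12 * ((u - 1 / 2) * (u + 1 / 2)) := by
    linear_combination hs - 12 * hu2
  have hstar : 5 / 2 * (2 - π + π * u) * (s - 4 * ν) ≤ (π - 2) * (u - 1 / 2) * (t - 8 * ν) := by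
    refine le_of_mul_le_mul_right ?_ (by linarith : (0 : ℝ) < 12 * (u + 1 / 2))
    have e3' : (π - 2) * ((s + 4 * ν) * (t - 8 * ν)) * (s - 4 * ν)
        = (π - 2) * (t - 8 * ν) * (12 * ((u - 1 / 2) * (u + 1 / 2))) := by
      linear_combination ((π - 2) * (t - 8 * ν)) * e3
    nlinarith [mul_le_mul_of_nonneg_right key hA0]
  nlinarith [mul_le_mul_of_nonneg_right hnum hA0, mul_le_mul_of_nonneg_right hd1 hts]

lemma defect_secant_nonpos (hν0 : 0 ≤ ν) (hu2 : u ^ 2 = 1 - ν ^ 2) (hu14 : 1 / 4 ≤ u)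
    (hu12 : u < 1 / 2) : defect ν (7 / 10 - 2 / 5 * u) ≤ 0 := by
  obtain ⟨s, t, hs, hs0, ht, ht0, hd⟩ := exists_sqrt_defect_eq ν
  rw [hd, sub_nonpos]
  have hπ1 : 3.141592 < π := pi_gt_d6
  have hπ2 : π < 3.141593 := pi_lt_d6
  set Y := 7 / 10 - 2 / 5 * u with hY
  have hν86 : 0.866 ≤ ν := by nlinarith
  have hν97 : ν ≤ 0.9683 := by nlinarith
  have h43 : 0 ≤ 4 * ν ^ 2 - 3 := by nlinarith
  have hs346 : 3.464 ≤ s := by nlinarith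
  have ht1509 : 15.099 ≤ t := by nlinarith
  have hts : 7.35 ≤ t - 8 * ν := by nlinarith
  have key2 : 45 * (1 - π * Y / 2) * (1 + 2 * u) ≤ 6 / 5 * ((t - 8 * ν) * (4 * ν + s)) := by
    have h1 : 1 - π * Y / 2 ≤ 0.2147 := by
      nlinarith [mul_le_mul_of_nonneg_left (show Y ≥ 1 / 2 by linarith [hY])
        (by positivity : (0 : ℝ) ≤ π / 2)]
    have h1' : 0 ≤ 1 - π * Y / 2 := by
      nlinarith [mul_le_mul_of_nonneg_left (show Y ≤ 0.6 by linarith [hY])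
        (by positivity : (0 : ℝ) ≤ π / 2)]
    have h2 : 7.35 * 6.92 ≤ (t - 8 * ν) * (4 * ν + s) := by
      nlinarith [mul_le_mul (show (7.35 : ℝ) ≤ t - 8 * ν by linarith)
        (show (6.92 : ℝ) ≤ 4 * ν + s by linarith) (by norm_num) (by linarith)]
    nlinarith [mul_le_mul h1 (show 1 + 2 * u ≤ 2 by linarith) (by linarith) (by norm_num)]
  have e5 : (4 * ν - s) * (4 * ν + s) = 3 * (4 * ν ^ 2 - 3) := by linear_combination -hs
  have e6 : (1 - 2 * u) * (1 + 2 * u) = 4 * ν ^ 2 - 3 := by linear_combination -4 * hu2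
  refine le_of_mul_le_mul_right ?_ (by nlinarith : (0 : ℝ) < (1 + 2 * u) * (4 * ν + s))
  have eqL : (t - 8 * ν) * (3 * (1 - 2 * Y)) * ((1 + 2 * u) * (4 * ν + s))
      = -(6 / 5) * ((t - 8 * ν) * (4 * ν + s)) * (4 * ν ^ 2 - 3) := by
    linear_combination (-(6 / 5) * (t - 8 * ν) * (4 * ν + s)) * e6
  have eqR : 15 * ((1 - π * Y / 2) * (s - 4 * ν)) * ((1 + 2 * u) * (4 * ν + s))
      = -(45 * (1 - π * Y / 2) * (1 + 2 * u) * (4 * ν ^ 2 - 3)) := by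
    linear_combination (-15 * (1 - π * Y / 2) * (1 + 2 * u)) * e5
  nlinarith [mul_le_mul_of_nonneg_right key2 h43]

lemma defect_three_fifths_nonpos (hν0 : 0 ≤ ν) (hu2 : u ^ 2 = 1 - ν ^ 2) (hu0 : 0 ≤ u)
    (hu14 : u ≤ 1 / 4) : defect ν (3 / 5) ≤ 0 := by
  obtain ⟨s, t, hs, hs0, ht, ht0, hd⟩ := exists_sqrt_defect_eq ν
  rw [hd, sub_nonpos]
  have hπ1 : 3.141592 < π := pi_gt_d6
  have hν96 : 0.968 ≤ ν := by nlinarith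
  have hA0 : 0 ≤ 4 * ν - s := by nlinarith
  have hAub : 4 * ν - s ≤ 0.43 := by nlinarith [sq_nonneg (s - (4 * ν - 0.43))]
  have ht1512 : 15.12 ≤ t := by nlinarith
  have h1 : 1 - π * (3 / 5) / 2 ≤ 0.058 := by linarith
  nlinarith [mul_le_mul h1 hAub hA0 (by norm_num)]

end regions

lemma w_eq_ucot {ν : ℝ} (hν : ν ≠ 1) : w ν = ucot (Ups ν) := if_neg hν

lemma sq_Ups {ν : ℝ} (hν : 0 ≤ 1 - ν ^ 2) : Ups ν ^ 2 = 1 - ν ^ 2 := sq_sqrt hν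

lemma Ups_pos {ν : ℝ} (hν : ν ^ 2 < 1) : 0 < Ups ν := sqrt_pos.mpr (by linarith)

lemma Ups_le_one (ν : ℝ) : Ups ν ≤ 1 := sqrt_le_one.mpr (by nlinarith)

lemma Ups_sqrt_three_div_two : Ups (√3 / 2) = 1 / 2 := by
  rw [Ups, div_pow, sq_sqrt (by norm_num), show (1 : ℝ) - 3 / 2 ^ 2 = (1 / 2) ^ 2 by norm_num,
    sqrt_sq (by norm_num)]

lemma Ups_ne_half {ν : ℝ} (hν : 0 ≤ ν) (hne : ν ≠ √3 / 2) : Ups ν ≠ 1 / 2 := by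
  intro h
  apply hne
  have hpos : 0 < 1 - ν ^ 2 := sqrt_pos.mp (by rw [← Ups, h]; norm_num)
  have hsq := sq_Ups hpos.le
  rw [h] at hsq
  refine (pow_left_inj₀ hν (by positivity) two_ne_zero).mp ?_
  rw [div_pow, sq_sqrt (by norm_num)]
  linarith

lemma w_zero : w 0 = 0 := by
  rw [w_eq_ucot zero_ne_one, show Ups 0 = 1 by simp [Ups], ucot_one]

lemma w_sqrt_three_div_two : w (√3 / 2) = 1 / 2 := by
  have h : √3 / 2 ≠ 1 := by nlinarith [sq_sqrt (show (0 : ℝ) ≤ 3 by norm_num)]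
  rw [w_eq_ucot h, Ups_sqrt_three_div_two, ucot_half]

lemma Ups_mem_Ioc {ν : ℝ} (hν : ν ∈ Ico 0 1) : Ups ν ∈ Ioc 0 1 :=
  ⟨Ups_pos (by nlinarith [hν.1, hν.2]), Ups_le_one ν⟩

lemma half_lt_w {ν : ℝ} (hν : ν ∈ Ico 0 1) (hu : Ups ν < 1 / 2) : 1 / 2 < w ν := by
  rw [w_eq_ucot hν.2.ne, ← ucot_half]
  exact strictAntiOn_ucot ⟨(Ups_mem_Ioc hν).1, by linarith⟩ ⟨by norm_num, by norm_num⟩ hu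

lemma w_lt_half {ν : ℝ} (hν : ν ∈ Ico 0 1) (hu : 1 / 2 < Ups ν) : w ν < 1 / 2 := by
  rw [w_eq_ucot hν.2.ne, ← ucot_half]
  exact strictAntiOn_ucot ⟨by norm_num, by norm_num⟩ ⟨by linarith, by linarith [Ups_le_one ν]⟩ hu

lemma one_sub_two_mul_w_ne_zero {ν : ℝ} (hν : ν ∈ Ico 0 1) (hne : ν ≠ √3 / 2) :
    1 - 2 * w ν ≠ 0 := by
  rcases (Ups_ne_half hν.1 hne).lt_or_gt with hu | hu
  · linarith [half_lt_w hν hu]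
  · linarith [w_lt_half hν hu]

lemma sqrt_sub_eq_eta_mul {ν : ℝ} (hne : ν ≠ √3 / 2) (hd : 1 - 2 * w ν ≠ 0) :
    √(9 + 4 * ν ^ 2) - 4 * ν = eta ν * (3 * (1 - 2 * w ν)) := by
  rw [eta, if_neg hne, div_mul_cancel₀ _ (mul_ne_zero three_ne_zero hd)]

lemma Cnu_eq {ν : ℝ} (hν : ν ∈ Ico 0 1) :
    Cnu ν = π / 12 * (√(9 + 4 * ν ^ 2) - 4 * ν) + (1 - π / 4) * eta ν := by
  by_cases hc : ν = √3 / 2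
  · have h3 : √3 ^ 2 = 3 := sq_sqrt (by norm_num)
    have h12 : √(9 + 4 * ν ^ 2) = 4 * ν := by
      rw [hc, div_pow, h3, show (9 : ℝ) + 4 * (3 / 2 ^ 2) = (4 * (√3 / 2)) ^ 2 by
        linear_combination -4 * h3, sqrt_sq (by positivity)]
    rw [Cnu, h12, hc, w_sqrt_three_div_two]
    ring
  · rw [Cnu, sqrt_sub_eq_eta_mul hc (one_sub_two_mul_w_ne_zero hν hc)]
    ring

lemma Cnu_le_of_nonneg_mul_defect {ν : ℝ} (hne : ν ≠ √3 / 2) (hd : 1 - 2 * w ν ≠ 0)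
    (h : 0 ≤ (1 - 2 * w ν) * defect ν (w ν)) :
    Cnu ν ≤ (√(225 + 4 * ν ^ 2) - 8 * ν) / 15 := by
  have key : (1 - 2 * w ν) * defect ν (w ν)
      = 3 * (1 - 2 * w ν) ^ 2 * (√(225 + 4 * ν ^ 2) - 8 * ν - 15 * Cnu ν) := by
    rw [defect, sqrt_sub_eq_eta_mul hne hd, Cnu]
    ring
  rw [key] at h
  have := (mul_nonneg_iff_of_pos_left (by positivity)).mp h
  linarith

lemma Cnu_sqrt_three_div_two_le :
    Cnu (√3 / 2) ≤ (√(225 + 4 * (√3 / 2) ^ 2) - 8 * (√3 / 2)) / 15 := by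
  have h3 : √3 ^ 2 = 3 := sq_sqrt (by norm_num)
  have h3lb : 1.732 ≤ √3 := by nlinarith [sqrt_nonneg 3]
  have h3ub : √3 ≤ 1.7321 := by nlinarith [sqrt_nonneg 3]
  have h228 : 225 + 4 * (√3 / 2) ^ 2 = 228 := by rw [div_pow, h3]; norm_num
  have ht : √228 ^ 2 = 228 := sq_sqrt (by norm_num)
  have htlb : 15.09 ≤ √228 := by nlinarith [sqrt_nonneg 228]
  have hπ1 : 3.141592 < π := pi_gt_d6
  have hπ2 : π < 3.141593 := pi_lt_d6
  rw [Cnu, w_sqrt_three_div_two, eta, if_pos rfl, h228, mul_one_div,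
    div_le_div_iff₀ (by nlinarith) (by norm_num)]
  have hq1 : 8.16 ≤ √228 - 8 * (√3 / 2) := by linarith
  have hq2 : 1.97 ≤ √3 * (π - 2) := by nlinarith
  nlinarith [mul_le_mul hq1 hq2 (by norm_num) (by linarith)]

lemma defect_nonneg_of_half_lt {ν : ℝ} (hν : ν ∈ Ico 0 1) (hu : 1 / 2 < Ups ν) :
    0 ≤ defect ν (w ν) := by
  obtain ⟨hν0, hν1⟩ := hν
  obtain ⟨hu0, hu1⟩ := Ups_mem_Ioc ⟨hν0, hν1⟩
  have hu2 := sq_Ups (ν := ν) (by nlinarith)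
  have hmem : Ups ν ∈ Ioo 0 2 := ⟨hu0, by linarith⟩
  rw [w_eq_ucot hν1.ne]
  rcases le_or_gt ν (1 / 2) with h1 | h1
  · exact (defect_tangent_one_nonneg hν0 h1 hu2 hu0.le).trans
      (defect_antitone hν0 (ucot_le_tangent_one hmem))
  rcases le_or_gt ν (3 / 5) with h2 | h2
  · exact (defect_tangent_half_nonneg h1.le h2 hu2 hu0.le).trans
      (defect_antitone hν0 (ucot_le_tangent_half hmem))
  · exact defect_between_nonneg h2.le hu2 hu (one_sub_le_ucot ⟨hu.le, hu1⟩)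
      (ucot_le_tangent_half hmem)

lemma defect_nonpos_of_lt_half {ν : ℝ} (hν : ν ∈ Ico 0 1) (hu : Ups ν < 1 / 2) :
    defect ν (w ν) ≤ 0 := by
  obtain ⟨hν0, hν1⟩ := hν
  obtain ⟨hu0, hu1⟩ := Ups_mem_Ioc ⟨hν0, hν1⟩
  have hu2 := sq_Ups (ν := ν) (by nlinarith)
  rw [w_eq_ucot hν1.ne]
  rcases le_or_gt (1 / 4) (Ups ν) with h | h
  · exact (defect_antitone hν0 (secant_le_ucot ⟨h, hu.le⟩)).trans
      (defect_secant_nonpos hν0 hu2 h hu)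
  · exact (defect_antitone hν0 (three_fifths_le_ucot ⟨hu0, h.le⟩)).trans
      (defect_three_fifths_nonpos hν0 hu2 hu0.le h.le)

lemma Cnu_le {ν : ℝ} (hν : ν ∈ Ico 0 1) : Cnu ν ≤ (√(225 + 4 * ν ^ 2) - 8 * ν) / 15 := by
  by_cases hc : ν = √3 / 2
  · exact hc ▸ Cnu_sqrt_three_div_two_le
  refine Cnu_le_of_nonneg_mul_defect hc (one_sub_two_mul_w_ne_zero hν hc) ?_
  rcases (Ups_ne_half hν.1 hc).lt_or_gt with hu | hu
  · exact mul_nonneg_of_nonpos_of_nonpos (by linarith [half_lt_w hν hu])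
      (defect_nonpos_of_lt_half hν hu)
  · exact mul_nonneg (by linarith [w_lt_half hν hu]) (defect_nonneg_of_half_lt hν hu)

/-- For every ν ∈ [0,1):
(i) V_0(0)/V_0(iΥ_ν) = (π/2) w_ν (for ν ∈ (0,1); for ν = 0 this is read as w_0 = 0),
so that C_ν = η_ν (1 − V_0(0)/V_0(iΥ_ν));
(ii) C_ν = (π/12)(√(9+4ν²) − 4ν) + (1 − π/4) η_ν;
(iii) C_ν ≤ (√(225+4ν²) − 8ν)/15, i.e. the minimum in the proof of Theorem 1 is always
attained at the first entry. -/
theorem Cnu_facts (ν : ℝ) (hν : ν ∈ Set.Ico (0 : ℝ) 1) :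
    ((ν ≠ 0 →
        Vl 0 0 / Vl 0 (Complex.I * (Ups ν : ℂ)) = ((Real.pi / 2 * w ν : ℝ) : ℂ) ∧
        ((Cnu ν : ℝ) : ℂ)
          = ((eta ν : ℝ) : ℂ) * (1 - Vl 0 0 / Vl 0 (Complex.I * (Ups ν : ℂ)))) ∧
      w 0 = 0) ∧
    Cnu ν = Real.pi / 12 * (Real.sqrt (9 + 4 * ν ^ 2) - 4 * ν) + (1 - Real.pi / 4) * eta ν ∧
    Cnu ν ≤ (Real.sqrt (225 + 4 * ν ^ 2) - 8 * ν) / 15 := by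
  have hratio : Vl 0 0 / Vl 0 (Complex.I * (Ups ν : ℂ)) = ((π / 2 * w ν : ℝ) : ℂ) := by
    rw [Vl_zero_div_Vl_zero_I_mul (Complex.ofReal_ne_zero.mpr (Ups_mem_Ioc hν).1.ne'),
      w_eq_ucot hν.2.ne, ucot]
    push_cast [Complex.ofReal_cot]
    ring_nf
  refine ⟨⟨fun _ => ⟨hratio, ?_⟩, w_zero⟩, Cnu_eq hν, Cnu_le hν⟩
  rw [hratio, Cnu]
  push_cast
  ring
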